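/- Let (X,d) be a finite metric space and S ⊆ X the set chosen by greedy farthest-first traversal with k ≥ 1 centers (initialized at an arbitrary point, then repeatedly adding a point maximizing its distance to the current set). Then the covering radius of S, r(S) = max_{x∈X} min_{s∈S} d(x,s), is at most twice the optimal k-center covering radius: r(S) ≤ 2·min_{|S'|≤k} r(S'). -/

import Mathlib

/-- Covering radius of a nonempty finite set of centers `S` in a finite metric
space: `r(S) = max_{x ∈ X} min_{s ∈ S} d(x, s)`. -/
noncomputable def covRad {X : Type*} [Fintype X] [Nonempty X] [MetricSpace X]
    (S : Finset X) (hS : S.Nonempty) : ℝ :=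
  Finset.univ.sup' Finset.univ_nonempty fun x => S.inf' hS fun c => dist x c

/-- Gonzalez 2-approximation: let `s 0, s 1, …` be the centers chosen
by greedy farthest-first traversal (each new center `s (i+1)` maximizes the minimum
distance to the previously chosen centers `s 0, …, s i`).  Then for `k ≥ 1`, the
covering radius of the first `k` greedy centers is at most twice the covering
radius of any set of at most `k` centers. -/
theorem stmt_6 {X : Type*} [Fintype X] [Nonempty X] [MetricSpace X] [DecidableEq X]
    (s : ℕ → X)
    (hgreedy : ∀ i : ℕ, ∀ x : X,
      ((Finset.range (i + 1)).inf' Finset.nonempty_range_add_one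
          fun j => dist x (s j)) ≤
        ((Finset.range (i + 1)).inf' Finset.nonempty_range_add_one
          fun j => dist (s (i + 1)) (s j)))
    (k : ℕ) (hk : 1 ≤ k)
    (S' : Finset X) (hS' : S'.Nonempty) (hcard : S'.card ≤ k) :
    covRad ((Finset.range k).image s)
        (Finset.Nonempty.image
          (Finset.nonempty_range_iff.mpr (Nat.one_le_iff_ne_zero.mp hk)) s) ≤
      2 * covRad S' hS' := by
  classical
  have hrk : (Finset.range k).Nonempty := Finset.nonempty_range_iff.mpr (by omega)
  set r := covRad S' hS' with hrdef
  set R := covRad ((Finset.range k).image s)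
      (Finset.Nonempty.image
        (Finset.nonempty_range_iff.mpr (Nat.one_le_iff_ne_zero.mp hk)) s) with hRdef
  -- maximizer xh of min-distance to greedy centers
  obtain ⟨xh, -, hxh⟩ := Finset.exists_mem_eq_sup'
    (Finset.univ_nonempty (α := X))
    (fun x : X => ((Finset.range k).image s).inf'
      (Finset.Nonempty.image
        (Finset.nonempty_range_iff.mpr (Nat.one_le_iff_ne_zero.mp hk)) s)
      fun c => dist x c)
  have hR : R = (Finset.range k).inf' hrk fun t => dist xh (s t) := by
    rw [hRdef, covRad, hxh, Finset.inf'_image]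
    rfl
  -- every point is within r of some center of S'
  have hnear : ∀ y : X, ∃ c ∈ S', dist y c ≤ r := by
    intro y
    obtain ⟨c, hc, hcd⟩ := Finset.exists_mem_eq_inf' hS' (fun c => dist y c)
    refine ⟨c, hc, ?_⟩
    rw [← hcd]
    exact Finset.le_sup' (fun x => S'.inf' hS' fun c => dist x c) (Finset.mem_univ y)
  -- the k+1 points
  set p : Fin (k + 1) → X := fun t => if h : (t : ℕ) < k then s t else xh with hp
  -- pairwise lower bound
  have key : ∀ i j : Fin (k + 1), (i : ℕ) < (j : ℕ) → R ≤ dist (p i) (p j) := by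
    intro i j hij
    have hik : (i : ℕ) < k := by omega
    have hpi : p i = s i := dif_pos hik
    by_cases hjk : (j : ℕ) < k
    · -- both greedy centers
      have hpj : p j = s j := dif_pos hjk
      have hj1 : (j : ℕ) - 1 + 1 = (j : ℕ) := by omega
      have h1 : R ≤ (Finset.range ((j : ℕ) - 1 + 1)).inf' Finset.nonempty_range_add_one
          fun t => dist xh (s t) := by
        rw [hR]
        exact Finset.inf'_mono _ (Finset.range_subset_range.mpr (by omega)) _
      have h2 := hgreedy ((j : ℕ) - 1) xh
      have h3 : ((Finset.range ((j : ℕ) - 1 + 1)).inf' Finset.nonempty_range_add_one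
          fun t => dist (s ((j : ℕ) - 1 + 1)) (s t)) ≤ dist (s ((j : ℕ) - 1 + 1)) (s i) :=
        Finset.inf'_le _ (Finset.mem_range.mpr (by omega))
      have hsj : s ((j : ℕ) - 1 + 1) = s (j : ℕ) := by rw [hj1]
      rw [hpi, hpj, dist_comm]
      calc R ≤ _ := h1
        _ ≤ _ := h2
        _ ≤ dist (s ((j : ℕ) - 1 + 1)) (s i) := h3
        _ = dist (s (j : ℕ)) (s (i : ℕ)) := by rw [hsj]
    · -- j is the maximizer point
      have hpj : p j = xh := dif_neg hjk
      rw [hpi, hpj, dist_comm, hR]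
      exact Finset.inf'_le _ (Finset.mem_range.mpr hik)
  -- nearest centers, pigeonhole
  have hnear' : ∀ t : Fin (k + 1), ∃ c ∈ S', dist (p t) c ≤ r := fun t => hnear (p t)
  choose g hg hgd using hnear'
  have hcardlt : Fintype.card { x // x ∈ S' } < Fintype.card (Fin (k + 1)) := by
    simp [Fintype.card_coe]
    omega
  obtain ⟨i, j, hne, heq⟩ := Fintype.exists_ne_map_eq_of_card_lt
    (fun t : Fin (k + 1) => (⟨g t, hg t⟩ : { x // x ∈ S' })) hcardlt
  have hgij : g i = g j := by simpa using heq
  have hdij : dist (p i) (p j) ≤ 2 * r := by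
    calc dist (p i) (p j) ≤ dist (p i) (g i) + dist (g i) (p j) := dist_triangle _ _ _
      _ ≤ r + r := by
          refine add_le_add (hgd i) ?_
          rw [dist_comm, hgij]; exact hgd j
      _ = 2 * r := by ring
  rcases lt_or_gt_of_ne hne with h | h
  · exact (key i j h).trans hdij
  · refine (key j i h).trans ?_
    rw [dist_comm]; exact hdij
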